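/- Let d ≥ 1, ω := exp(2πi/d), and D a nonempty subset of ℤ/dℤ. With x_k := (1/|D|)·∑_{a ∈ D} ω^{a·k} for k ∈ ℤ/dℤ, one has (1/d)·∑_{s=0}^{d-1} x_s·x_{d-s} = 1/|D|. -/

import Mathlib

/-!
Write `ψ` for the standard additive character `k ↦ ω ^ k.val` of `ZMod d`, so that
`x k = |D|⁻¹ ∑_{a ∈ D} ψ (a k)`, while `x (d - s) = x (-s)`. Expanding `∑_s x s * x (-s)` gives
`|D|⁻² ∑_{a, b ∈ D} ∑_s ψ (s (a - b))`, and by orthogonality of characters the inner sum is `d`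
when `a = b` and `0` otherwise, leaving `d / |D|`.
-/

open Finset

theorem ZMod.sum_range_natCast {M : Type*} [AddCommMonoid M] (n : ℕ) [NeZero n]
    (f : ZMod n → M) : ∑ s ∈ range n, f s = ∑ t, f t :=
  sum_nbij' (↑) ZMod.val (by simp) (by simp [ZMod.val_lt])
    (fun s hs => ZMod.val_cast_of_lt (mem_range.mp hs)) (by simp) (by simp)

theorem AddChar.sum_mul_sum_neg {R R' : Type*} [CommRing R] [Fintype R] [DecidableEq R]
    [CommRing R'] [IsDomain R'] {ψ : AddChar R R'} (hψ : ψ.IsPrimitive) (D : Finset R) :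
    ∑ t, (∑ a ∈ D, ψ (a * t)) * (∑ b ∈ D, ψ (b * -t)) = Fintype.card R * #D := by
  have hprod (a b t : R) : ψ (a * t) * ψ (b * -t) = ψ (t * (a - b)) := by
    rw [← map_add_eq_mul]; ring_nf
  calc ∑ t, (∑ a ∈ D, ψ (a * t)) * (∑ b ∈ D, ψ (b * -t))
      = ∑ a ∈ D, ∑ b ∈ D, ∑ t, ψ (t * (a - b)) := by
        simp only [sum_mul_sum, hprod]
        rw [sum_comm]; exact sum_congr rfl fun _ _ => sum_comm
    _ = ∑ a ∈ D, ∑ b ∈ D, ((if a = b then Fintype.card R else 0 : ℕ) : R') := by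
        simp only [AddChar.sum_mulShift _ hψ, sub_eq_zero]
    _ = Fintype.card R * #D := by simp [mul_comm]

theorem AddChar.sum_mean_mul_mean_neg {R K : Type*} [CommRing R] [Fintype R] [DecidableEq R]
    [Field K] {ψ : AddChar R K} (hψ : ψ.IsPrimitive) (D : Finset R) :
    ∑ t, (1 / #D * ∑ a ∈ D, ψ (a * t)) * (1 / #D * ∑ b ∈ D, ψ (b * -t))
      = Fintype.card R / #D := by
  simp only [mul_mul_mul_comm (1 / (#D : K)), ← mul_sum, AddChar.sum_mul_sum_neg hψ]
  rcases eq_or_ne (#D : K) 0 with h | h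
  · simp [h]
  · field_simp

theorem exp_two_pi_I_div_pow_eq_stdAddChar (d : ℕ) [NeZero d] (m : ℕ) :
    Complex.exp (2 * Real.pi * Complex.I / d) ^ m = ZMod.stdAddChar (m : ZMod d) := by
  rw [← Complex.exp_nat_mul, ZMod.stdAddChar_apply, ZMod.toCircle_natCast]
  ring_nf

theorem E_D_value_general (d : ℕ) (hd : 1 ≤ d)
    (D : Finset (ZMod d))
    (ω : ℂ) (hω : ω = Complex.exp (2 * Real.pi * Complex.I / d))
    (x : ZMod d → ℂ)
    (hx : ∀ k : ZMod d, x k = (1 / (D.card : ℂ)) * ∑ a ∈ D, ω ^ (a.val * k.val)) :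
    (1 / (d : ℂ)) * ∑ s ∈ Finset.range d, x ((s : ZMod d)) * x ((d : ZMod d) - (s : ZMod d))
      = 1 / (D.card : ℂ) := by
  have : NeZero d := ⟨by omega⟩
  have hx' (k : ZMod d) : x k = 1 / #D * ∑ a ∈ D, ZMod.stdAddChar (a * k) := by
    simp only [hx, hω, exp_two_pi_I_div_pow_eq_stdAddChar, Nat.cast_mul, ZMod.natCast_zmod_val]
  rw [ZMod.natCast_self, ZMod.sum_range_natCast d (fun t => x t * x (0 - t))]
  simp only [zero_sub, hx', ZMod.card,
    AddChar.sum_mean_mul_mean_neg (ZMod.isPrimitive_stdAddChar d)]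
  rw [one_div_mul_eq_div, div_div_cancel_left' (NeZero.ne (d : ℂ)), one_div]

/-- The trace of the idempotent at a Gérardin solution of the E-system:
`(1/d)·∑_{s=0}^{d-1} x_s·x_{d-s} = 1/|D|`. -/
theorem E_D_value (d : ℕ) (hd : 1 ≤ d)
    (D : Finset (ZMod d)) (hD : D.Nonempty)
    (ω : ℂ) (hω : ω = Complex.exp (2 * Real.pi * Complex.I / d))
    (x : ZMod d → ℂ)
    (hx : ∀ k : ZMod d, x k = (1 / (D.card : ℂ)) * ∑ a ∈ D, ω ^ (a.val * k.val)) :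
    (1 / (d : ℂ)) * ∑ s ∈ Finset.range d, x ((s : ZMod d)) * x ((d : ZMod d) - (s : ZMod d))
      = 1 / (D.card : ℂ) :=
  E_D_value_general d hd D ω hω x hx
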